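/- Let M ⊆ E = ℝ^N be an embedded submanifold with orthogonal projections P(m), Q(m) onto τ_m M and τ_m M^⊥, and let F : U → ℝ^{N−d} be a local defining function with A_F(x) = F′(x)*(F′(x)F′(x)*)^{-1}. Let x : [0,T] → M be a path with |x_{s,t}| ≤ C ω(s,t)^{1/p} for a control ω and p ∈ [2,3), whose image lies in U. Then Q(x_s) x_{s,t} = −½ A_F(x_s) F″(x_s)[P(x_s)x_{s,t} ⊗ P(x_s)x_{s,t}] + O(ω(s,t)^{3/p}) for s, t close; in particular the normal component of the increment x_{s,t} is determined up to third-order errors by its tangential component. -/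

import Mathlib

set_option maxHeartbeats 1000000

open Set Metric ContinuousLinearMap


variable {E G : Type*} [NormedAddCommGroup E] [NormedSpace ℝ E]
  [NormedAddCommGroup G] [NormedSpace ℝ G]

abbrev ClmR (A B : Type*) [NormedAddCommGroup A] [NormedSpace ℝ A] [NormedAddCommGroup B]
    [NormedSpace ℝ B] : Type _ := A →L[ℝ] B

noncomputable instance instNACGClmR {F : Type*} [NormedAddCommGroup F] [NormedSpace ℝ F] :
    NormedAddCommGroup (ClmR E F) :=
  ContinuousLinearMap.toNormedAddCommGroup

noncomputable instance instNSClmR {F : Type*} [NormedAddCommGroup F] [NormedSpace ℝ F] :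
    NormedSpace ℝ (ClmR E F) :=
  ContinuousLinearMap.toNormedSpace

lemma hasFDerivAt_quad (B : E →L[ℝ] E →L[ℝ] G) (y w : E) :
    HasFDerivAt (fun z => B (z - y) (z - y)) (B.flip (w - y) + B (w - y)) w := by
  have hd : HasFDerivAt (fun z : E => ((z - y, z - y) : E × E))
      ((ContinuousLinearMap.id ℝ E).prod (ContinuousLinearMap.id ℝ E)) w :=
    HasFDerivAt.prodMk ((hasFDerivAt_id w).sub_const y) ((hasFDerivAt_id w).sub_const y)
  have hb := (B.isBoundedBilinearMap.hasFDerivAt (w - y, w - y)).comp w hd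
  convert hb using 1
  · rfl
  ext u
  simp [IsBoundedBilinearMap.deriv_apply, add_comm]

/-- Quantitative second-order Taylor estimate on a closed ball. -/
lemma quadratic_taylor_bound {U : Set E} (hU : IsOpen U) {f : E → G}
    (hf : ContDiffOn ℝ (⊤ : ℕ∞) f U) {y z : E} {r K₃ : ℝ}
    (hball : closedBall y r ⊆ U)
    (hK₃ : ∀ w ∈ closedBall y r, ‖fderiv ℝ (fderiv ℝ (fderiv ℝ f)) w‖ ≤ K₃)
    (hzr : ‖z - y‖ ≤ r) :
    ‖f z - f y - fderiv ℝ f y (z - y) -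
        (1 / 2 : ℝ) • (fderiv ℝ (fderiv ℝ f) y (z - y)) (z - y)‖
      ≤ K₃ * ‖z - y‖ ^ 3 := by
  set f₁ := fderiv ℝ f with hf₁
  set f₂ := fderiv ℝ f₁ with hf₂
  set f₃ := fderiv ℝ f₂ with hf₃
  have hyU : y ∈ U := hball (mem_closedBall_self (le_trans (norm_nonneg _) hzr))
  -- differentiability facts on U
  have hf1 : ContDiffOn ℝ (⊤ : ℕ∞) f₁ U := hf.fderiv_of_isOpen hU (by simp)
  have hf2 : ContDiffOn ℝ (⊤ : ℕ∞) f₂ U := hf1.fderiv_of_isOpen hU (by simp)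
  have hd1 : ∀ w ∈ U, HasFDerivAt f (f₁ w) w := fun w hw =>
    ((hf.differentiableOn (by simp)).differentiableAt (hU.mem_nhds hw)).hasFDerivAt
  have hd2 : ∀ w ∈ U, HasFDerivAt f₁ (f₂ w) w := fun w hw =>
    ((hf1.differentiableOn (by simp)).differentiableAt (hU.mem_nhds hw)).hasFDerivAt
  have hd3 : ∀ w ∈ U, HasFDerivAt f₂ (f₃ w) w := fun w hw =>
    ((hf2.differentiableOn (by simp)).differentiableAt (hU.mem_nhds hw)).hasFDerivAt
  set ρ := ‖z - y‖ with hρ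
  have hρ0 : 0 ≤ ρ := norm_nonneg _
  have hK₃0 : 0 ≤ K₃ := le_trans (ContinuousLinearMap.opNorm_nonneg _) (hK₃ y (mem_closedBall_self (hρ0.trans hzr)))
  have hsub : closedBall y ρ ⊆ closedBall y r := closedBall_subset_closedBall hzr
  -- Step 1 : f₂ is Lipschitz on closedBall y r with constant K₃
  have lip : ∀ w ∈ closedBall y ρ, ‖f₂ w - f₂ y‖ ≤ K₃ * ρ := by
    intro w hw
    have := (convex_closedBall y r).norm_image_sub_le_of_norm_hasFDerivWithin_le
      (f := f₂) (f' := f₃)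
      (fun u hu => (hd3 u (hball hu)).hasFDerivWithinAt) hK₃
      (mem_closedBall_self (hρ0.trans hzr)) (hsub hw)
    calc ‖f₂ w - f₂ y‖ ≤ K₃ * ‖w - y‖ := this
    _ ≤ K₃ * ρ := by
        exact mul_le_mul_of_nonneg_left (mem_closedBall_iff_norm.1 hw) hK₃0
  -- Step 2 : ψ w = f₁ w - f₁ y - f₂ y (w - y)
  set B := f₂ y with hB
  set ψ : E → E →L[ℝ] G := fun w => f₁ w - f₁ y - B (w - y) with hψ
  have hψd : ∀ w ∈ U, HasFDerivAt ψ (f₂ w - f₂ y) w := by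
    intro w hw
    have h1 : HasFDerivAt (fun u => f₁ u - f₁ y) (f₂ w) w := (hd2 w hw).sub_const _
    have h2 : HasFDerivAt (fun u : E => B (u - y)) B w := by
      have : HasFDerivAt (fun u : E => B u - B y) B w := (B.hasFDerivAt).sub_const (B y)
      simpa [map_sub] using this
    simpa [hψ, hB] using h1.fun_sub h2
  have hψest : ∀ w ∈ closedBall y ρ, ‖ψ w‖ ≤ K₃ * ρ * ρ := by
    intro w hw
    have h0 : ψ y = 0 := by simp [hψ]
    have := (convex_closedBall y ρ).norm_image_sub_le_of_norm_hasFDerivWithin_le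
      (f := ψ) (f' := fun w => f₂ w - f₂ y)
      (fun u hu => (hψd u (hball (hsub hu))).hasFDerivWithinAt)
      (fun u hu => lip u hu)
      (mem_closedBall_self hρ0) hw
    have hwy : ‖w - y‖ ≤ ρ := mem_closedBall_iff_norm.1 hw
    calc ‖ψ w‖ = ‖ψ w - ψ y‖ := by rw [h0, sub_zero]
    _ ≤ K₃ * ρ * ‖w - y‖ := this
    _ ≤ K₃ * ρ * ρ := mul_le_mul_of_nonneg_left hwy (mul_nonneg hK₃0 hρ0)
  -- Step 3 : φ
  set φ : E → G := fun w => f w - f y - f₁ y (w - y) - (1/2 : ℝ) • (B (w - y)) (w - y) with hφ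
  have hsymm : ∀ u v : E, B u v = B v u := by
    intro u v
    have : ContDiffAt ℝ (⊤ : ℕ∞) f y := hf.contDiffAt (hU.mem_nhds hyU)
    exact this.isSymmSndFDerivAt (by rw [minSmoothness_of_isRCLikeNormedField]; exact WithTop.coe_le_coe.mpr le_top) u v
  have hφd : ∀ w ∈ closedBall y ρ, HasFDerivAt φ (ψ w) w := by
    intro w hw
    have h1 : HasFDerivAt (fun u => f u - f y - f₁ y (u - y)) (f₁ w - f₁ y) w := by
      have ha : HasFDerivAt (fun u => f u - f y) (f₁ w) w := (hd1 w (hball (hsub hw))).sub_const _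
      have hb : HasFDerivAt (fun u : E => f₁ y (u - y)) (f₁ y) w := by
        have : HasFDerivAt (fun u : E => f₁ y u - f₁ y y) (f₁ y) w :=
          (f₁ y).hasFDerivAt.sub_const _
        simpa [map_sub] using this
      exact ha.sub hb
    have h2 : HasFDerivAt (fun u : E => (1/2 : ℝ) • (B (u - y)) (u - y))
        ((1/2 : ℝ) • (B.flip (w - y) + B (w - y))) w :=
      (hasFDerivAt_quad B y w).const_smul (1/2 : ℝ)
    have h3 : (1/2 : ℝ) • (B.flip (w - y) + B (w - y)) = B (w - y) := by
      ext u
      have := hsymm u (w - y)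
      simp only [ContinuousLinearMap.smul_apply, ContinuousLinearMap.add_apply,
        ContinuousLinearMap.flip_apply]
      rw [this]
      module
    rw [h3] at h2
    simpa [hψ, hφ] using h1.fun_sub h2
  have hφest : ‖φ z‖ ≤ K₃ * ρ * ρ * ρ := by
    have h0 : φ y = 0 := by simp [hφ]
    have := (convex_closedBall y ρ).norm_image_sub_le_of_norm_hasFDerivWithin_le
      (f := φ) (f' := ψ)
      (fun u hu => (hφd u hu).hasFDerivWithinAt)
      (fun u hu => hψest u hu)
      (mem_closedBall_self hρ0) (mem_closedBall_iff_norm.2 le_rfl)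
    calc ‖φ z‖ = ‖φ z - φ y‖ := by rw [h0, sub_zero]
    _ ≤ K₃ * ρ * ρ * ‖z - y‖ := this
    _ = K₃ * ρ * ρ * ρ := by rw [hρ]
  calc ‖f z - f y - fderiv ℝ f y (z - y) - (1/2 : ℝ) • (fderiv ℝ (fderiv ℝ f) y (z - y)) (z - y)‖
      = ‖φ z‖ := rfl
  _ ≤ K₃ * ρ * ρ * ρ := hφest
  _ = K₃ * ρ ^ 3 := by ring


lemma isUnit_comp_adjoint {E F : Type*} [NormedAddCommGroup E] [InnerProductSpace ℝ E]
    [NormedAddCommGroup F] [InnerProductSpace ℝ F] [FiniteDimensional ℝ E]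
    [FiniteDimensional ℝ F] (T : E →L[ℝ] F) (hT : Function.Surjective T) :
    IsUnit (T ∘L ContinuousLinearMap.adjoint T) := by
  set S : F →L[ℝ] F := T ∘L ContinuousLinearMap.adjoint T with hS
  have hker : ∀ v : F, S v = 0 → v = 0 := by
    intro v hv
    have h1 : (inner ℝ (ContinuousLinearMap.adjoint T v) (ContinuousLinearMap.adjoint T v) : ℝ)
        = 0 := by
      rw [ContinuousLinearMap.adjoint_inner_left]
      have h0 : T (ContinuousLinearMap.adjoint T v) = 0 := hv
      rw [h0, inner_zero_right]
    have h2 : ContinuousLinearMap.adjoint T v = 0 := inner_self_eq_zero.1 h1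
    obtain ⟨u, hu⟩ := hT v
    have h3 : (inner ℝ v v : ℝ) = 0 := by
      have hvv : (inner ℝ v v : ℝ) = inner ℝ v (T u) := by rw [hu]
      rw [hvv, ← ContinuousLinearMap.adjoint_inner_left, h2, inner_zero_left]
    exact inner_self_eq_zero.1 h3
  have hinj : Function.Injective (S : F →ₗ[ℝ] F) := by
    rw [← LinearMap.ker_eq_bot, LinearMap.ker_eq_bot']
    intro v hv
    exact hker v hv
  have hbij : Function.Bijective (S : F →ₗ[ℝ] F) :=
    ⟨hinj, (LinearMap.injective_iff_surjective).1 hinj⟩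
  let e : F ≃ₗ[ℝ] F := LinearEquiv.ofBijective (S : F →ₗ[ℝ] F) hbij
  let e' : F ≃L[ℝ] F := e.toContinuousLinearEquiv
  refine ⟨⟨S, (e'.symm : F →L[ℝ] F), ?_, ?_⟩, rfl⟩
  · ext v
    exact e'.apply_symm_apply v
  · ext v
    exact e'.symm_apply_apply v


lemma final_est {E G : Type*} [NormedAddCommGroup E] [NormedSpace ℝ E]
    [NormedAddCommGroup G] [NormedSpace ℝ G]
    (h : E) (f1 : E →L[ℝ] G) (B : E →L[ℝ] E →L[ℝ] G) (Ay : G →L[ℝ] E) (Py Qy : E →L[ℝ] E)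
    (hQapp : ∀ v, Qy v = Ay (f1 v)) (hPy : Py = 1 - Qy)
    (K₂ K₃ KA r ωp : ℝ) (hK₂0 : 0 ≤ K₂) (hK₃0 : 0 ≤ K₃) (hKA0 : 0 ≤ KA) (hr : 0 < r)
    (hAy : ‖Ay‖ ≤ KA) (hBn : ‖B‖ ≤ K₂) (hhr : ‖h‖ ≤ r) (hωp0 : 0 ≤ ωp)
    (hh3 : ‖h‖ ^ 3 ≤ ωp)
    (E1 : ‖f1 h + (1/2 : ℝ) • (B h) h‖ ≤ K₃ * ‖h‖ ^ 3) :
    ‖Qy h + (1 / 2 : ℝ) • (Ay ((B (Py h)) (Py h)))‖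
      ≤ (KA * K₃ + (1/2) * KA * (K₂ * (2 * (KA * (K₃ * r + K₂ / 2)) +
          (KA * (K₃ * r + K₂ / 2)) * (KA * (K₃ * r + K₂ / 2)) * r))) * ωp := by
  set KQ := KA * (K₃ * r + K₂ / 2) with hKQ
  have hh0 : 0 ≤ ‖h‖ := norm_nonneg _
  have hKQ0 : 0 ≤ KQ := by rw [hKQ]; positivity
  have hBvw : ∀ v w : E, ‖(B v) w‖ ≤ K₂ * ‖v‖ * ‖w‖ := by
    intro v w
    calc ‖(B v) w‖ ≤ ‖B‖ * ‖v‖ * ‖w‖ := le_opNorm₂ B v w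
    _ ≤ K₂ * ‖v‖ * ‖w‖ := by gcongr
  have hqbound : ‖Qy h‖ ≤ KQ * ‖h‖ ^ 2 := by
    have h2 : ‖(1/2 : ℝ) • (B h) h‖ ≤ (1/2) * (K₂ * ‖h‖ * ‖h‖) := by
      rw [norm_smul, Real.norm_eq_abs, abs_of_nonneg (by norm_num : (0:ℝ) ≤ 1/2)]
      have := hBvw h h
      linarith
    have h1 : ‖f1 h‖ ≤ K₃ * ‖h‖ ^ 3 + (1/2) * (K₂ * ‖h‖ * ‖h‖) := by
      calc ‖f1 h‖ = ‖(f1 h + (1/2 : ℝ) • (B h) h) - (1/2 : ℝ) • (B h) h‖ := by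
            rw [add_sub_cancel_right]
      _ ≤ ‖f1 h + (1/2 : ℝ) • (B h) h‖ + ‖(1/2 : ℝ) • (B h) h‖ := norm_sub_le _ _
      _ ≤ K₃ * ‖h‖ ^ 3 + (1/2) * (K₂ * ‖h‖ * ‖h‖) := add_le_add E1 h2
    calc ‖Qy h‖ = ‖Ay (f1 h)‖ := by rw [hQapp]
    _ ≤ ‖Ay‖ * ‖f1 h‖ := le_opNorm _ _
    _ ≤ KA * (K₃ * ‖h‖ ^ 3 + (1/2) * (K₂ * ‖h‖ * ‖h‖)) :=
        mul_le_mul hAy h1 (norm_nonneg _) hKA0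
    _ ≤ KQ * ‖h‖ ^ 2 := by
        rw [hKQ]
        have e1 : ‖h‖^3 ≤ r * ‖h‖^2 := by nlinarith
        have e2 : KA * K₃ * ‖h‖^3 ≤ KA * K₃ * (r * ‖h‖^2) :=
          mul_le_mul_of_nonneg_left e1 (mul_nonneg hKA0 hK₃0)
        nlinarith
  have hPh : Py h = h - Qy h := by
    rw [hPy]; simp [ContinuousLinearMap.sub_apply]
  have hid : Qy h + (1/2 : ℝ) • (Ay ((B (Py h)) (Py h)))
      = Ay (f1 h + (1/2 : ℝ) • (B h) h)
        + (1/2 : ℝ) • Ay ((B (Py h)) (Py h) - (B h) h) := by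
    rw [hQapp]
    simp only [map_add, map_smul, map_sub, smul_sub]
    abel
  have hcor : ‖(B (Py h)) (Py h) - (B h) h‖
      ≤ K₂ * (2 * KQ + KQ * KQ * r) * ‖h‖ ^ 3 := by
    have hexp : (B (Py h)) (Py h) - (B h) h
        = (B (Qy h)) (Qy h) - (B h) (Qy h) - (B (Qy h)) h := by
      rw [hPh, map_sub]
      simp only [ContinuousLinearMap.sub_apply, map_sub]
      abel
    rw [hexp]
    have b1 := hBvw h (Qy h)
    have b2 := hBvw (Qy h) h
    have b3 := hBvw (Qy h) (Qy h)
    have hq0 := norm_nonneg (Qy h)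
    have e1 : ‖h‖ * ‖Qy h‖ ≤ KQ * ‖h‖^3 := by nlinarith
    have e2 : ‖Qy h‖ * ‖Qy h‖ ≤ KQ * KQ * r * ‖h‖ ^ 3 := by
      have e3 : ‖Qy h‖ * ‖Qy h‖ ≤ (KQ * ‖h‖ ^ 2) * (KQ * ‖h‖ ^ 2) :=
        mul_le_mul hqbound hqbound hq0 (by positivity)
      have e4 : KQ * KQ * (‖h‖ ^ 3 * ‖h‖) ≤ KQ * KQ * (‖h‖ ^ 3 * r) :=
        mul_le_mul_of_nonneg_left
          (mul_le_mul_of_nonneg_left hhr (pow_nonneg hh0 3)) (by positivity)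
      nlinarith
    calc ‖(B (Qy h)) (Qy h) - (B h) (Qy h) - (B (Qy h)) h‖
        ≤ ‖(B (Qy h)) (Qy h) - (B h) (Qy h)‖ + ‖(B (Qy h)) h‖ := norm_sub_le _ _
    _ ≤ ‖(B (Qy h)) (Qy h)‖ + ‖(B h) (Qy h)‖ + ‖(B (Qy h)) h‖ := by
        have := norm_sub_le ((B (Qy h)) (Qy h)) ((B h) (Qy h))
        linarith
    _ ≤ K₂ * ‖Qy h‖ * ‖Qy h‖ + K₂ * ‖h‖ * ‖Qy h‖ + K₂ * ‖Qy h‖ * ‖h‖ := by linarith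
    _ ≤ K₂ * (2 * KQ + KQ * KQ * r) * ‖h‖ ^ 3 := by
        nlinarith [mul_le_mul_of_nonneg_left e1 hK₂0, mul_le_mul_of_nonneg_left e2 hK₂0]
  rw [hid]
  have t1 : ‖Ay (f1 h + (1/2 : ℝ) • (B h) h)‖ ≤ KA * (K₃ * ‖h‖^3) := by
    calc ‖Ay (f1 h + (1/2 : ℝ) • (B h) h)‖
        ≤ ‖Ay‖ * ‖f1 h + (1/2 : ℝ) • (B h) h‖ := le_opNorm _ _
    _ ≤ KA * (K₃ * ‖h‖^3) := mul_le_mul hAy E1 (norm_nonneg _) hKA0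
  have t2 : ‖(1/2 : ℝ) • Ay ((B (Py h)) (Py h) - (B h) h)‖
      ≤ (1/2) * (KA * (K₂ * (2 * KQ + KQ * KQ * r) * ‖h‖ ^ 3)) := by
    rw [norm_smul, Real.norm_eq_abs, abs_of_nonneg (by norm_num : (0:ℝ) ≤ 1/2)]
    have t3 : ‖Ay ((B (Py h)) (Py h) - (B h) h)‖
        ≤ KA * (K₂ * (2 * KQ + KQ * KQ * r) * ‖h‖ ^ 3) := by
      calc ‖Ay ((B (Py h)) (Py h) - (B h) h)‖
          ≤ ‖Ay‖ * ‖(B (Py h)) (Py h) - (B h) h‖ := le_opNorm _ _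
      _ ≤ KA * (K₂ * (2 * KQ + KQ * KQ * r) * ‖h‖ ^ 3) := by
          apply mul_le_mul hAy _ (norm_nonneg _) hKA0
          calc ‖(B (Py h)) (Py h) - (B h) h‖
              ≤ K₂ * (2 * KQ + KQ * KQ * r) * ‖h‖ ^ 3 := hcor
          _ = K₂ * (2 * KQ + KQ * KQ * r) * ‖h‖ ^ 3 := rfl
    linarith
  calc ‖Ay (f1 h + (1/2 : ℝ) • (B h) h) + (1/2 : ℝ) • Ay ((B (Py h)) (Py h) - (B h) h)‖
      ≤ ‖Ay (f1 h + (1/2 : ℝ) • (B h) h)‖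
        + ‖(1/2 : ℝ) • Ay ((B (Py h)) (Py h) - (B h) h)‖ := norm_add_le _ _
  _ ≤ KA * (K₃ * ‖h‖^3) + (1/2) * (KA * (K₂ * (2 * KQ + KQ * KQ * r) * ‖h‖ ^ 3)) :=
      add_le_add t1 t2
  _ = (KA * K₃ + (1/2) * KA * (K₂ * (2 * KQ + KQ * KQ * r))) * ‖h‖ ^ 3 := by ring
  _ ≤ (KA * K₃ + (1/2) * KA * (K₂ * (2 * KQ + KQ * KQ * r))) * ωp := by
      have hc : 0 ≤ KA * K₃ + (1/2) * KA * (K₂ * (2 * KQ + KQ * KQ * r)) := by positivity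
      exact mul_le_mul_of_nonneg_left hh3 hc

/-- Let `M ⊆ ℝ^N` be an embedded submanifold with orthogonal projections
`P(m)`, `Q(m)` onto `τ_m M` and `τ_m M^⊥` (given on a defining chart `U` by
`Q = F′*(F′F′*)⁻¹F′` and `P = I − Q` for a local defining function `F` with `A_F =
F′*(F′F′*)⁻¹`).  If `x : [0,T] → M` has increments `‖x_{s,t}‖ ≤ C ω(s,t)^{1/p}` for a control
`ω` and `p ∈ [2,3)`, and the image of `x` lies in `U`, then
`Q(x_s)x_{s,t} = −½ A_F(x_s) F″(x_s)[P(x_s)x_{s,t} ⊗ P(x_s)x_{s,t}] + O(ω(s,t)^{3/p})`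
for `s, t` close. -/
theorem normal_increment_estimate {N d : ℕ}
    (T : ℝ) (hT : 0 < T)
    (M U : Set (EuclideanSpace ℝ (Fin N))) (hU : IsOpen U)
    (F : EuclideanSpace ℝ (Fin N) → EuclideanSpace ℝ (Fin (N - d)))
    (hF : ContDiffOn ℝ (⊤ : ℕ∞) F U)
    (hdef : ∀ z ∈ U, (z ∈ M ↔ F z = 0))
    (hsurj : ∀ z ∈ U, Function.Surjective (fderiv ℝ F z))
    (P Q : EuclideanSpace ℝ (Fin N) →
      (EuclideanSpace ℝ (Fin N) →L[ℝ] EuclideanSpace ℝ (Fin N)))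
    (hQ : ∀ z ∈ U, Q z = (ContinuousLinearMap.adjoint (fderiv ℝ F z)) ∘L
      (Ring.inverse ((fderiv ℝ F z) ∘L ContinuousLinearMap.adjoint (fderiv ℝ F z))) ∘L
      (fderiv ℝ F z))
    (hP : ∀ z ∈ U, P z = 1 - Q z)
    (ω : ℝ → ℝ → ℝ)
    (hω_cont : ContinuousOn (fun q : ℝ × ℝ => ω q.1 q.2)
      {q : ℝ × ℝ | 0 ≤ q.1 ∧ q.1 ≤ q.2 ∧ q.2 ≤ T})
    (hω_nonneg : ∀ s t : ℝ, 0 ≤ s → s ≤ t → t ≤ T → 0 ≤ ω s t)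
    (hω_super : ∀ s u t : ℝ, 0 ≤ s → s ≤ u → u ≤ t → t ≤ T → ω s u + ω u t ≤ ω s t)
    (hω_diag : ∀ s : ℝ, 0 ≤ s → s ≤ T → ω s s = 0)
    (p : ℝ) (hp2 : 2 ≤ p) (hp3 : p < 3)
    (x : ℝ → EuclideanSpace ℝ (Fin N))
    (hxM : ∀ t ∈ Icc (0 : ℝ) T, x t ∈ M) (hxU : ∀ t ∈ Icc (0 : ℝ) T, x t ∈ U)
    (C : ℝ) (hC : 0 < C)
    (hxvar : ∀ s t : ℝ, 0 ≤ s → s ≤ t → t ≤ T → ‖x t - x s‖ ≤ C * ω s t ^ (1 / p)) :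
    ∃ C' > (0 : ℝ), ∃ δ > (0 : ℝ), ∀ s t : ℝ, 0 ≤ s → s ≤ t → t ≤ T → t - s ≤ δ →
      ‖Q (x s) (x t - x s) + (1 / 2 : ℝ) •
          ((ContinuousLinearMap.adjoint (fderiv ℝ F (x s)) ∘L
            Ring.inverse ((fderiv ℝ F (x s)) ∘L
              ContinuousLinearMap.adjoint (fderiv ℝ F (x s))))
            (iteratedFDeriv ℝ 2 F (x s)
              ![P (x s) (x t - x s), P (x s) (x t - x s)]))‖
        ≤ C' * ω s t ^ (3 / p) := by
  have hp0 : (0 : ℝ) < p := by linarith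
  -- continuity of x on [0,T]
  have hxcont : ContinuousOn x (Icc 0 T) := by
    intro t₀ ht₀
    rw [Metric.continuousWithinAt_iff]
    intro ε hε
    have hη0 : (0:ℝ) < (ε / (2 * C)) ^ p := by positivity
    obtain ⟨δ', hδ', hδ'prop⟩ :=
      Metric.continuousWithinAt_iff.1 (hω_cont (t₀, t₀) ⟨ht₀.1, le_rfl, ht₀.2⟩)
        ((ε / (2 * C)) ^ p) hη0
    refine ⟨δ', hδ', ?_⟩
    intro t ht htd
    have haIcc : 0 ≤ min t t₀ := le_min ht.1 ht₀.1
    have hab : min t t₀ ≤ max t t₀ := min_le_max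
    have hbT : max t t₀ ≤ T := max_le ht.2 ht₀.2
    have hdista : dist (min t t₀) t₀ ≤ dist t t₀ := by
      rw [Real.dist_eq, Real.dist_eq]
      rcases le_total t t₀ with h | h
      · rw [min_eq_left h]
      · rw [min_eq_right h]; simp
    have hdistb : dist (max t t₀) t₀ ≤ dist t t₀ := by
      rw [Real.dist_eq, Real.dist_eq]
      rcases le_total t t₀ with h | h
      · rw [max_eq_right h]; simp
      · rw [max_eq_left h]
    have hqd : dist ((min t t₀, max t t₀) : ℝ × ℝ) (t₀, t₀) < δ' := by
      rw [Prod.dist_eq]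
      exact lt_of_le_of_lt (max_le hdista hdistb) htd
    have hωab : ω (min t t₀) (max t t₀) < (ε / (2 * C)) ^ p := by
      have := hδ'prop ⟨haIcc, hab, hbT⟩ hqd
      rw [Real.dist_eq, hω_diag t₀ ht₀.1 ht₀.2, sub_zero] at this
      exact lt_of_le_of_lt (le_abs_self _) this
    have hxab : dist (x t) (x t₀) ≤ C * ω (min t t₀) (max t t₀) ^ (1 / p) := by
      rcases le_total t t₀ with h | h
      · rw [dist_comm, dist_eq_norm]
        have := hxvar (min t t₀) (max t t₀) haIcc hab hbT
        rw [min_eq_left h, max_eq_right h] at this ⊢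
        exact this
      · rw [dist_eq_norm]
        have := hxvar (min t t₀) (max t t₀) haIcc hab hbT
        rw [min_eq_right h, max_eq_left h] at this ⊢
        exact this
    have hrpow : ω (min t t₀) (max t t₀) ^ (1 / p) ≤ ε / (2 * C) := by
      have h1 : ω (min t t₀) (max t t₀) ^ (1 / p) ≤ ((ε / (2 * C)) ^ p) ^ (1 / p) :=
        Real.rpow_le_rpow (hω_nonneg _ _ haIcc hab hbT) hωab.le (by positivity)
      have h2 : ((ε / (2 * C)) ^ p) ^ (1 / p) = ε / (2 * C) := by
        rw [← Real.rpow_mul (by positivity), mul_one_div_cancel hp0.ne', Real.rpow_one]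
      rw [h2] at h1
      exact h1
    calc dist (x t) (x t₀) ≤ C * ω (min t t₀) (max t t₀) ^ (1 / p) := hxab
    _ ≤ C * (ε / (2 * C)) := by nlinarith
    _ < ε := by
        rw [mul_div_assoc', mul_comm, mul_div_assoc]
        have : C / (2 * C) = 1/2 := by field_simp
        rw [this]; linarith
  -- the compact image and a compact neighborhood of it inside U
  set K : Set (EuclideanSpace ℝ (Fin N)) := x '' Icc 0 T with hKdef
  have hKcomp : IsCompact K := (isCompact_Icc).image_of_continuousOn hxcont
  have hKU : K ⊆ U := by rintro _ ⟨u, hu, rfl⟩; exact hxU u hu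
  obtain ⟨r, hr, hVU'⟩ : ∃ δ > (0:ℝ), cthickening δ K ⊆ U :=
    hKcomp.exists_cthickening_subset_open hU hKU
  have hVcomp : IsCompact (cthickening r K) := hKcomp.cthickening
  have hKV : K ⊆ cthickening r K := self_subset_cthickening K
  have hBall : ∀ y ∈ K, closedBall y r ⊆ cthickening r K :=
    fun y hy => closedBall_subset_cthickening hy r
  -- derivative bounds
  have hF1 : ContDiffOn ℝ (⊤ : ℕ∞) (fderiv ℝ F) U := hF.fderiv_of_isOpen hU (by simp)
  have hF2 : ContDiffOn ℝ (⊤ : ℕ∞) (fderiv ℝ (fderiv ℝ F)) U := hF1.fderiv_of_isOpen hU (by simp)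
  letI := instNACGClmR (E := EuclideanSpace ℝ (Fin N))
    (F := EuclideanSpace ℝ (Fin N) →L[ℝ] EuclideanSpace ℝ (Fin N) →L[ℝ] EuclideanSpace ℝ (Fin (N - d)))
  letI := instNSClmR (E := EuclideanSpace ℝ (Fin N))
    (F := EuclideanSpace ℝ (Fin N) →L[ℝ] EuclideanSpace ℝ (Fin N) →L[ℝ] EuclideanSpace ℝ (Fin (N - d)))
  have hF3 : ContDiffOn ℝ (⊤ : ℕ∞) (fderiv ℝ (fderiv ℝ (fderiv ℝ F))) U :=
    hF2.fderiv_of_isOpen hU (by simp)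
  obtain ⟨K₂, hK₂0, hK₂⟩ : ∃ K₂ ≥ (0:ℝ), ∀ z ∈ cthickening r K,
      ‖fderiv ℝ (fderiv ℝ F) z‖ ≤ K₂ := by
    obtain ⟨B, hB⟩ := hVcomp.exists_bound_of_continuousOn (f := fderiv ℝ (fderiv ℝ F)) (hF2.continuousOn.mono hVU')
    exact ⟨max B 0, le_max_right _ _, fun z hz => (hB z hz).trans (le_max_left _ _)⟩
  obtain ⟨K₃, hK₃0, hK₃⟩ : ∃ K₃ ≥ (0:ℝ), ∀ z ∈ cthickening r K,
      ‖fderiv ℝ (fderiv ℝ (fderiv ℝ F)) z‖ ≤ K₃ := by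
    obtain ⟨B, hB⟩ := hVcomp.exists_bound_of_continuousOn (f := fderiv ℝ (fderiv ℝ (fderiv ℝ F)))
      (hF3.continuousOn.mono hVU')
    exact ⟨max B 0, le_max_right _ _, fun z hz => (hB z hz).trans (le_max_left _ _)⟩
  -- bound for A_F on K
  obtain ⟨KA, hKA0, hKA⟩ : ∃ KA ≥ (0:ℝ), ∀ z ∈ K,
      ‖(ContinuousLinearMap.adjoint (fderiv ℝ F z)) ∘L
        (Ring.inverse ((fderiv ℝ F z) ∘L ContinuousLinearMap.adjoint (fderiv ℝ F z)))‖
        ≤ KA := by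
    have hf1c : ContinuousOn (fun z => fderiv ℝ F z) K := hF1.continuousOn.mono hKU
    have hadj : ContinuousOn (fun z => ContinuousLinearMap.adjoint (fderiv ℝ F z)) K :=
      (LinearIsometryEquiv.continuous _).comp_continuousOn hf1c
    have hScont : ContinuousOn
        (fun z => (fderiv ℝ F z) ∘L ContinuousLinearMap.adjoint (fderiv ℝ F z)) K :=
      hf1c.clm_comp hadj
    have hinv : ContinuousOn
        (fun z => Ring.inverse ((fderiv ℝ F z) ∘L ContinuousLinearMap.adjoint (fderiv ℝ F z)))
        K := by
      intro z hz
      obtain ⟨u, hu⟩ := isUnit_comp_adjoint (fderiv ℝ F z) (hsurj z (hKU hz))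
      have hca : ContinuousAt Ring.inverse
          ((fderiv ℝ F z) ∘L ContinuousLinearMap.adjoint (fderiv ℝ F z)) := by
        rw [← hu]; exact NormedRing.inverse_continuousAt u
      exact ContinuousAt.comp_continuousWithinAt (g := Ring.inverse) hca (hScont z hz)
    have hAcont : ContinuousOn (fun z => (ContinuousLinearMap.adjoint (fderiv ℝ F z)) ∘L
        (Ring.inverse ((fderiv ℝ F z) ∘L ContinuousLinearMap.adjoint (fderiv ℝ F z)))) K :=
      hadj.clm_comp hinv
    obtain ⟨B, hB⟩ := hKcomp.exists_bound_of_continuousOn hAcont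
    exact ⟨max B 0, le_max_right _ _, fun z hz => (hB z hz).trans (le_max_left _ _)⟩
  -- choice of δ making ω small
  obtain ⟨δ, hδ, hωsmall⟩ : ∃ δ > (0:ℝ), ∀ s t : ℝ, 0 ≤ s → s ≤ t → t ≤ T → t - s ≤ δ →
      ω s t ≤ (r / C) ^ p := by
    have hε₀ : (0:ℝ) < (r / C) ^ p := by positivity
    set D : Set (ℝ × ℝ) := {q : ℝ × ℝ | 0 ≤ q.1 ∧ q.1 ≤ q.2 ∧ q.2 ≤ T} with hD
    have hDclosed : IsClosed D := by
      apply IsClosed.inter (isClosed_le continuous_const continuous_fst)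
      exact IsClosed.inter (isClosed_le continuous_fst continuous_snd)
        (isClosed_le continuous_snd continuous_const)
    have hDsub : D ⊆ Icc (0:ℝ) T ×ˢ Icc (0:ℝ) T := by
      rintro ⟨s, t⟩ ⟨h1, h2, h3⟩
      exact ⟨⟨h1, h2.trans h3⟩, ⟨h1.trans h2, h3⟩⟩
    have hDcomp : IsCompact D :=
      IsCompact.of_isClosed_subset (isCompact_Icc.prod isCompact_Icc) hDclosed hDsub
    set A : Set (ℝ × ℝ) := D ∩ (fun q : ℝ × ℝ => ω q.1 q.2) ⁻¹' (Ici ((r / C) ^ p)) with hA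
    have hAclosed : IsClosed A :=
      hω_cont.preimage_isClosed_of_isClosed hDclosed isClosed_Ici
    have hAcomp : IsCompact A := IsCompact.of_isClosed_subset hDcomp hAclosed inter_subset_left
    rcases eq_empty_or_nonempty A with hAe | hAne
    · refine ⟨1, one_pos, fun s t hs hst htT _ => ?_⟩
      by_contra hlt
      have : ((s, t) : ℝ × ℝ) ∈ A := ⟨⟨hs, hst, htT⟩, le_of_lt (lt_of_not_ge hlt)⟩
      rw [hAe] at this
      exact this
    · obtain ⟨m, hmA, hmin⟩ := hAcomp.exists_isMinOn hAne
        ((continuous_snd.sub continuous_fst).continuousOn)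
      have hm0 : 0 < m.2 - m.1 := by
        rcases hmA with ⟨⟨h1, h2, h3⟩, h4⟩
        rcases lt_or_eq_of_le h2 with h | h
        · linarith
        · exfalso
          have : ω m.1 m.2 = 0 := by rw [← h]; exact hω_diag m.1 h1 (h2.trans h3)
          have := le_trans (mem_Ici.1 h4) this.le
          nlinarith
      refine ⟨(m.2 - m.1) / 2, by linarith, fun s t hs hst htT hts => ?_⟩
      by_contra hlt
      have hmem : ((s, t) : ℝ × ℝ) ∈ A := ⟨⟨hs, hst, htT⟩, le_of_lt (lt_of_not_ge hlt)⟩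
      have h5 : m.2 - m.1 ≤ t - s := hmin hmem
      linarith
  -- the final constant
  refine ⟨(KA * K₃ + (1/2) * KA * (K₂ * (2 * (KA * (K₃ * r + K₂ / 2)) +
      (KA * (K₃ * r + K₂ / 2)) * (KA * (K₃ * r + K₂ / 2)) * r))) * C ^ 3 + 1,
    by positivity, δ, hδ, ?_⟩
  intro s t hs hst htT htsδ
  have hsIcc : s ∈ Icc (0:ℝ) T := ⟨hs, hst.trans htT⟩
  have htIcc : t ∈ Icc (0:ℝ) T := ⟨hs.trans hst, htT⟩
  have hyK : x s ∈ K := ⟨s, hsIcc, rfl⟩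
  have hyU : x s ∈ U := hKU hyK
  have hFy : F (x s) = 0 := (hdef _ hyU).1 (hxM s hsIcc)
  have hFz : F (x t) = 0 := (hdef _ (hxU t htIcc)).1 (hxM t htIcc)
  have hω0 : 0 ≤ ω s t := hω_nonneg s t hs hst htT
  have hωst : ω s t ≤ (r / C) ^ p := hωsmall s t hs hst htT htsδ
  have hh : ‖x t - x s‖ ≤ C * ω s t ^ (1 / p) := hxvar s t hs hst htT
  -- ‖h‖ ≤ r
  have hhr : ‖x t - x s‖ ≤ r := by
    have h1 : ω s t ^ (1 / p) ≤ ((r / C) ^ p) ^ (1 / p) :=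
      Real.rpow_le_rpow hω0 hωst (by positivity)
    have h2 : ((r / C) ^ p) ^ (1 / p) = r / C := by
      rw [← Real.rpow_mul (by positivity), mul_one_div_cancel hp0.ne', Real.rpow_one]
    rw [h2] at h1
    calc ‖x t - x s‖ ≤ C * ω s t ^ (1 / p) := hh
    _ ≤ C * (r / C) := by nlinarith
    _ = r := by field_simp
  -- ‖h‖³ ≤ C³ ω^{3/p}
  have hh3 : ‖x t - x s‖ ^ 3 ≤ C ^ 3 * ω s t ^ (3 / p) := by
    have hpow : (ω s t ^ (1 / p)) ^ (3:ℕ) = ω s t ^ (3 / p) := by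
      rw [← Real.rpow_natCast (ω s t ^ (1 / p)) 3, ← Real.rpow_mul hω0]
      congr 1
      push_cast
      ring
    calc ‖x t - x s‖ ^ 3 ≤ (C * ω s t ^ (1 / p)) ^ 3 :=
      pow_le_pow_left₀ (norm_nonneg _) hh 3
    _ = C ^ 3 * (ω s t ^ (1 / p)) ^ (3:ℕ) := by ring
    _ = C ^ 3 * ω s t ^ (3 / p) := by rw [hpow]
  -- Taylor estimate
  have hTay := quadratic_taylor_bound hU hF (Set.Subset.trans (hBall _ hyK) hVU')
    (fun w hw => hK₃ w (hBall _ hyK hw)) hhr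
  have E1 : ‖fderiv ℝ F (x s) (x t - x s) +
      (1/2 : ℝ) • (fderiv ℝ (fderiv ℝ F) (x s) (x t - x s)) (x t - x s)‖
      ≤ K₃ * ‖x t - x s‖ ^ 3 := by
    rw [hFy, hFz] at hTay
    calc ‖fderiv ℝ F (x s) (x t - x s) +
        (1/2 : ℝ) • (fderiv ℝ (fderiv ℝ F) (x s) (x t - x s)) (x t - x s)‖
        = ‖-(fderiv ℝ F (x s) (x t - x s) +
          (1/2 : ℝ) • (fderiv ℝ (fderiv ℝ F) (x s) (x t - x s)) (x t - x s))‖ :=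
          (norm_neg _).symm
    _ = ‖(0 : EuclideanSpace ℝ (Fin (N-d))) - 0 - fderiv ℝ F (x s) (x t - x s) -
          (1/2 : ℝ) • (fderiv ℝ (fderiv ℝ F) (x s) (x t - x s)) (x t - x s)‖ := by
          congr 1; abel
    _ ≤ K₃ * ‖x t - x s‖ ^ 3 := hTay
  -- rewrite the iterated derivative
  have hiter : iteratedFDeriv ℝ 2 F (x s) ![P (x s) (x t - x s), P (x s) (x t - x s)]
      = (fderiv ℝ (fderiv ℝ F) (x s) (P (x s) (x t - x s))) (P (x s) (x t - x s)) := by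
    rw [iteratedFDeriv_two_apply]
    simp
  rw [hiter]
  -- apply the final abstract estimate
  have hQapp : ∀ v, Q (x s) v =
      ((ContinuousLinearMap.adjoint (fderiv ℝ F (x s))) ∘L
        (Ring.inverse ((fderiv ℝ F (x s)) ∘L
          ContinuousLinearMap.adjoint (fderiv ℝ F (x s))))) (fderiv ℝ F (x s) v) := by
    intro v
    rw [hQ _ hyU]
    rfl
  have hfin := final_est (x t - x s) (fderiv ℝ F (x s)) (fderiv ℝ (fderiv ℝ F) (x s))
    ((ContinuousLinearMap.adjoint (fderiv ℝ F (x s))) ∘L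
      (Ring.inverse ((fderiv ℝ F (x s)) ∘L ContinuousLinearMap.adjoint (fderiv ℝ F (x s)))))
    (P (x s)) (Q (x s)) hQapp (hP _ hyU) K₂ K₃ KA r (C ^ 3 * ω s t ^ (3 / p))
    hK₂0 hK₃0 hKA0 hr (hKA _ hyK) (hK₂ _ (hKV hyK)) hhr (by positivity) hh3 E1
  calc ‖Q (x s) (x t - x s) + (1 / 2 : ℝ) •
        (((ContinuousLinearMap.adjoint (fderiv ℝ F (x s))) ∘L
          (Ring.inverse ((fderiv ℝ F (x s)) ∘L
            ContinuousLinearMap.adjoint (fderiv ℝ F (x s)))))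
          ((fderiv ℝ (fderiv ℝ F) (x s) (P (x s) (x t - x s))) (P (x s) (x t - x s))))‖
      ≤ (KA * K₃ + (1/2) * KA * (K₂ * (2 * (KA * (K₃ * r + K₂ / 2)) +
          (KA * (K₃ * r + K₂ / 2)) * (KA * (K₃ * r + K₂ / 2)) * r)))
        * (C ^ 3 * ω s t ^ (3 / p)) := hfin
  _ ≤ ((KA * K₃ + (1/2) * KA * (K₂ * (2 * (KA * (K₃ * r + K₂ / 2)) +
          (KA * (K₃ * r + K₂ / 2)) * (KA * (K₃ * r + K₂ / 2)) * r))) * C ^ 3 + 1)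
        * ω s t ^ (3 / p) := by
      have hω3 : 0 ≤ ω s t ^ (3 / p) := Real.rpow_nonneg hω0 _
      nlinarith
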